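/- In the 9-vertex polygon P with vertices a1=(4752,4262), a2=(3383,413), b1=(759,2927), b2=(4745,4322), c1=(1213,691), c2=(2506,4423), a0=(3040,4460), b0=(1000,1000), c0=(5000,1000), the triangle △a0 b0 c0 is the unique maximum-area triangle with vertices among the vertices of P. -/
import Mathlib


noncomputable section

/-- Twice the signed area of the triangle `p q r`. -/
def det2 (p q r : ℝ × ℝ) : ℝ :=
  (q.1 - p.1) * (r.2 - p.2) - (q.2 - p.2) * (r.1 - p.1)

/-- Area of the triangle with vertices `p`, `q`, `r`. -/
def triArea (p q r : ℝ × ℝ) : ℝ := |det2 p q r| / 2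

/-- The vertices `v 0, v 1, ...` are in strictly convex position, listed in
counterclockwise cyclic order: every three consecutive vertices make a left turn. -/
def IsConvexCCW {m : ℕ} [NeZero m] (v : Fin m → ℝ × ℝ) : Prop :=
  ∀ i : Fin m, 0 < det2 (v i) (v (i + 1)) (v (i + 1 + 1))

/-- `x` lies on the closed cyclic arc from `a` forward to `b`. -/
def btwFin {m : ℕ} (a x b : Fin m) : Prop := (x - a).val ≤ (b - a).val

/-- `x` lies strictly between `a` and `b` on the cyclic arc from `a` forward to `b`. -/
def sbtwFin {m : ℕ} (a x b : Fin m) : Prop := btwFin a x b ∧ x ≠ a ∧ x ≠ b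

/-- The triangle `△ (v r) (v b) (v c)`, with `r, b, c` in counterclockwise cyclic
order, is 2-stable rooted at `r`: replacing `b` or `c` individually by any other
vertex of the polygon (respecting the cyclic order) does not strictly increase
the area. -/
def TwoStable {m : ℕ} (v : Fin m → ℝ × ℝ) (r b c : Fin m) : Prop :=
  (∀ x : Fin m, btwFin r x c → triArea (v r) (v x) (v c) ≤ triArea (v r) (v b) (v c)) ∧
  (∀ x : Fin m, btwFin b x r → triArea (v r) (v b) (v x) ≤ triArea (v r) (v b) (v c))

/-- The triangle `△ (v p) (v q) (v r)`, with `p, q, r` in counterclockwise cyclic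
order, is 3-stable: replacing any single one of its vertices by any other vertex
of the polygon (respecting the cyclic order) does not strictly increase the area. -/
def ThreeStable {m : ℕ} (v : Fin m → ℝ × ℝ) (p q r : Fin m) : Prop :=
  (∀ x : Fin m, btwFin r x q → triArea (v x) (v q) (v r) ≤ triArea (v p) (v q) (v r)) ∧
  (∀ x : Fin m, btwFin p x r → triArea (v p) (v x) (v r) ≤ triArea (v p) (v q) (v r)) ∧
  (∀ x : Fin m, btwFin q x p → triArea (v p) (v q) (v x) ≤ triArea (v p) (v q) (v r))

/-- Two polygon-aligned triangles, given by index triples in cyclic order,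
interleave: between every two cyclically successive vertices of one there is a
vertex of the other (possibly coinciding with one of them). -/
def InterleaveTri {m : ℕ} (i j k r s t : Fin m) : Prop :=
  (∃ x ∈ ({r, s, t} : Set (Fin m)), btwFin i x j) ∧
  (∃ x ∈ ({r, s, t} : Set (Fin m)), btwFin j x k) ∧
  (∃ x ∈ ({r, s, t} : Set (Fin m)), btwFin k x i) ∧
  (∃ x ∈ ({i, j, k} : Set (Fin m)), btwFin r x s) ∧
  (∃ x ∈ ({i, j, k} : Set (Fin m)), btwFin s x t) ∧
  (∃ x ∈ ({i, j, k} : Set (Fin m)), btwFin t x r)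

/-- The nine vertices of the counter-example polygon, in counterclockwise
convex-position order: b0, c1, a2, c0, a1, b2, a0, c2, b1. -/
def V9 : Fin 9 → ℝ × ℝ :=
  ![((1000 : ℝ), (1000 : ℝ)),  -- b0
    ((1213 : ℝ), (691 : ℝ)),   -- c1
    ((3383 : ℝ), (413 : ℝ)),   -- a2
    ((5000 : ℝ), (1000 : ℝ)),  -- c0
    ((4752 : ℝ), (4262 : ℝ)),  -- a1
    ((4745 : ℝ), (4322 : ℝ)),  -- b2
    ((3040 : ℝ), (4460 : ℝ)),  -- a0
    ((2506 : ℝ), (4423 : ℝ)),  -- c2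
    ((759 : ℝ), (2927 : ℝ))]   -- b1


def W9 : Fin 9 → ℤ × ℤ :=
  ![(1000,1000),(1213,691),(3383,413),(5000,1000),(4752,4262),
    (4745,4322),(3040,4460),(2506,4423),(759,2927)]

def DZ (i j k : Fin 9) : ℤ :=
  ((W9 j).1 - (W9 i).1) * ((W9 k).2 - (W9 i).2) -
    ((W9 j).2 - (W9 i).2) * ((W9 k).1 - (W9 i).1)

lemma V9_eq (i : Fin 9) : V9 i = (((W9 i).1 : ℝ), ((W9 i).2 : ℝ)) := by
  fin_cases i <;> norm_num [V9, W9]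

lemma det2_eq (i j k : Fin 9) : det2 (V9 i) (V9 j) (V9 k) = (DZ i j k : ℝ) := by
  rw [V9_eq i, V9_eq j, V9_eq k]
  simp only [det2, DZ]
  push_cast
  ring

lemma key : ∀ i j k : Fin 9, |DZ i j k| ≤ |DZ 6 0 3| ∧
    (|DZ i j k| = |DZ 6 0 3| → ({i, j, k} : Finset (Fin 9)) = {6, 0, 3}) := by
  decide

/-- In the 9-vertex counter-example polygon, the triangle `△a0 b0 c0`
(`a0 = V9 6`, `b0 = V9 0`, `c0 = V9 3`) is the unique maximum-area triangle with
vertices among the vertices of the polygon. -/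
theorem counterexample_unique_max_triangle :
    ∀ i j k : Fin 9,
      triArea (V9 i) (V9 j) (V9 k) ≤ triArea (V9 6) (V9 0) (V9 3) ∧
      (triArea (V9 i) (V9 j) (V9 k) = triArea (V9 6) (V9 0) (V9 3) →
        ({i, j, k} : Finset (Fin 9)) = {6, 0, 3}) := by
  intro i j k
  have h := key i j k
  constructor
  · unfold triArea
    rw [det2_eq, det2_eq, ← Int.cast_abs, ← Int.cast_abs]
    have := h.1
    have : ((|DZ i j k| : ℤ) : ℝ) ≤ ((|DZ 6 0 3| : ℤ) : ℝ) := by exact_mod_cast this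
    linarith
  · intro he
    apply h.2
    unfold triArea at he
    rw [det2_eq, det2_eq, ← Int.cast_abs, ← Int.cast_abs] at he
    have : ((|DZ i j k| : ℤ) : ℝ) = ((|DZ 6 0 3| : ℤ) : ℝ) := by linarith
    exact_mod_cast this
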